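/- arXiv:2311.08797 — 2 statements merged into one kernel-verified Lean document; each statement's English description precedes it below -/
import Mathlib

section
/- Let p ≥ 3 be a prime and G a finite abelian p-group of rank two. Then the double sum over nontrivial subgroups H ≤ G and integers k ≥ 2 of |H|^{-k}/k is at most 1. Consequently, for any set T of nontrivial subgroups of G, |Σ_{H∈T} (log(1 + 1/|H|) − 1/|H|)| ≤ 1. -/
/-!
A subgroup `K` of a two-generated abelian group has at most `p + 1` overgroups of index `p`: they
lie in `{x | x ^ p ∈ K}`, which has at most `p ^ 2 * |K|` elements because the kernel of
`x ↦ x ^ p` is as large as `G ⧸ G ^ p`, a group generated by two elements of order dividing `p`;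
and any two of them meet in `K`. Since every subgroup of order `p ^ (n + 1)` contains one of order
`p ^ n`, there are at most `(p + 1) ^ n` subgroups of order `p ^ n`, so
`∑_{H ≠ 1} |H|⁻² ≤ ∑_{n ≥ 1} ((p + 1) / p ^ 2) ^ n ≤ 4 / 5` for `p ≥ 3`. For `0 ≤ x ≤ 1 / 2`,
both `∑_{k ≥ 2} x ^ k / k` and `|log (1 + x) - x|` are at most `x ^ 2`.
-/

open scoped Classical

/-- The character group of `G`: monoid homomorphisms to `ℂˣ`. -/
abbrev CharGp (G : Type*) [Group G] := G →* ℂˣ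

/-- Complex conjugation acting on characters: `χ ↦ χ̄`. -/
noncomputable def charConj {G : Type*} [Group G] (χ : CharGp G) : CharGp G :=
  (Units.map (starRingEnd ℂ).toMonoidHom).comp χ

/-- Restriction of characters along an inclusion of subgroups: `R_K^H` on elements. -/
def resChar {G : Type*} [Group G] {K H : Subgroup G} (h : K ≤ H) (χ : CharGp H) : CharGp K :=
  χ.comp (Subgroup.inclusion h)

/-- Restriction of a character of `G` itself to a subgroup. -/
def resCharTop {G : Type*} [Group G] (K : Subgroup G) (χ : CharGp G) : CharGp K :=
  χ.comp K.subtype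

/-- A transfer system on a finite group `G`: a partial order on subgroups refining
inclusion, closed under conjugation and under intersection-pullback. -/
structure TransferSystem (G : Type*) [Group G] where
  rel : Subgroup G → Subgroup G → Prop
  le_of_rel : ∀ {K H : Subgroup G}, rel K H → K ≤ H
  refl : ∀ H : Subgroup G, rel H H
  trans : ∀ {K L H : Subgroup G}, rel K L → rel L H → rel K H
  conj : ∀ {K H : Subgroup G} (g : G), rel K H →
    rel (K.map (MulAut.conj g).toMonoidHom) (H.map (MulAut.conj g).toMonoidHom)
  inf_rel : ∀ {K H : Subgroup G} (L : Subgroup G), rel K H → L ≤ H → rel (K ⊓ L) L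

/-- A transfer system is saturated if `(K,H) ∈ ℛ` and `K ≤ L ≤ H` imply `(L,H) ∈ ℛ`. -/
def TransferSystem.Saturated {G : Type*} [Group G] (R : TransferSystem G) : Prop :=
  ∀ ⦃K L H : Subgroup G⦄, R.rel K H → K ≤ L → L ≤ H → R.rel L H

/-- A subgroup `H` is `ℛ`-cofibrant if there is no proper `K < H` with `(K,H) ∈ ℛ`. -/
def TransferSystem.Cofibrant {G : Type*} [Group G] (R : TransferSystem G)
    (H : Subgroup G) : Prop :=
  ¬ ∃ K : Subgroup G, K < H ∧ R.rel K H

/-- `𝒰_G`: subsets of `Ĝ` containing the trivial character and closed under conjugation. -/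
def UnivSet (G : Type*) [Group G] : Set (Set (CharGp G)) :=
  {U | (1 : CharGp G) ∈ U ∧ ∀ χ ∈ U, charConj χ ∈ U}

/-- `Tr(U)`: the relation `{(K,H) : K ≤ H and I_K^H(R_K^G(U)) ⊆ R_H^G(U)}`. -/
def TrRel {G : Type*} [Group G] (U : Set (CharGp G)) (K H : Subgroup G) : Prop :=
  ∃ h : K ≤ H, resChar h ⁻¹' (resCharTop K '' U) ⊆ resCharTop H '' U

open Finset Subgroup
open scoped Pointwise

namespace Subgroup

variable {G : Type*} [Group G]

lemma card_eq_card_mul_relIndex {K H : Subgroup G} (h : K ≤ H) :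
    Nat.card H = Nat.card K * K.relIndex H := by
  rw [← relIndex_bot_left, ← relIndex_bot_left, relIndex_mul_relIndex ⊥ K H bot_le h]

lemma eq_or_eq_of_relIndex_prime {K L H : Subgroup G} (hp : (K.relIndex H).Prime)
    (hKL : K ≤ L) (hLH : L ≤ H) : L = K ∨ L = H := by
  have hmul := relIndex_mul_relIndex K L H hKL hLH
  rcases hp.eq_one_or_self_of_dvd _ (Dvd.intro _ hmul) with h | h
  · exact Or.inl (le_antisymm (relIndex_eq_one.mp h) hKL)
  · refine Or.inr (le_antisymm hLH (relIndex_eq_one.mp ?_))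
    rw [h] at hmul
    exact (Nat.mul_eq_left hp.ne_zero).mp hmul

lemma card_filter_relIndex_eq_mul_add_card_le [Fintype G] {p : ℕ} (hp : p.Prime)
    {K X : Subgroup G} (hKX : K ≤ X) :
    #{H | K ≤ H ∧ H ≤ X ∧ K.relIndex H = p} * ((p - 1) * Nat.card K) + Nat.card K
      ≤ Nat.card X := by
  set 𝒮 : Finset (Subgroup G) := {H | K ≤ H ∧ H ≤ X ∧ K.relIndex H = p}
  let elems : Subgroup G → Finset G := fun H => (H : Set G).toFinset
  let new : Subgroup G → Finset G := fun H => elems H \ elems K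
  have card_elems (H : Subgroup G) : #(elems H) = Nat.card H :=
    (Nat.card_eq_card_toFinset _).symm
  have elems_mono {H H' : Subgroup G} (h : H ≤ H') : elems H ⊆ elems H' := by
    simpa [elems] using h
  have card_new : ∀ H ∈ 𝒮, #(new H) = (p - 1) * Nat.card K := by
    intro H hH
    obtain ⟨hKH, -, hindex⟩ := (mem_filter.mp hH).2
    rw [card_sdiff_of_subset (elems_mono hKH), card_elems, card_elems,
      card_eq_card_mul_relIndex hKH, hindex, Nat.sub_mul, one_mul, mul_comm]
  have disjoint : (𝒮 : Set (Subgroup G)).PairwiseDisjoint new := by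
    intro H₁ h₁ H₂ h₂ hne
    obtain ⟨hKH₁, -, hindex₁⟩ := (mem_filter.mp h₁).2
    obtain ⟨hKH₂, -, hindex₂⟩ := (mem_filter.mp h₂).2
    refine Finset.disjoint_left.mpr fun x hx₁ hx₂ => ?_
    simp only [new, elems, mem_sdiff, Set.mem_toFinset, SetLike.mem_coe] at hx₁ hx₂
    have hx : x ∈ H₁ ⊓ H₂ := mem_inf.mpr ⟨hx₁.1, hx₂.1⟩
    rcases eq_or_eq_of_relIndex_prime (hindex₁ ▸ hp) (le_inf hKH₁ hKH₂) inf_le_left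
      with h | h
    · exact hx₁.2 (h ▸ hx)
    · rcases eq_or_eq_of_relIndex_prime (hindex₂ ▸ hp) hKH₁ (inf_eq_left.mp h) with h' | h'
      · exact hx₁.2 (h' ▸ hx₁.1)
      · exact hne h'
  calc #𝒮 * ((p - 1) * Nat.card K) + Nat.card K
      = #(𝒮.biUnion new ∪ elems K) := by
        rw [card_union_of_disjoint ((disjoint_biUnion_left _ _ _).mpr fun H _ => sdiff_disjoint),
          card_biUnion disjoint, sum_congr rfl card_new, sum_const, smul_eq_mul, card_elems]
    _ ≤ #(elems X) := by
        refine card_le_card (union_subset (biUnion_subset.mpr fun H hH => ?_) (elems_mono hKX))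
        exact sdiff_subset.trans (elems_mono (mem_filter.mp hH).2.2.1)
    _ = Nat.card X := card_elems X

lemma card_comap_le_card_mul_card_ker {G' : Type*} [Group G'] [Finite G] [Finite G']
    (f : G →* G') (K : Subgroup G') : Nat.card (K.comap f) ≤ Nat.card K * Nat.card f.ker := by
  set φ := f.subgroupComap K
  have hker : Nat.card φ.ker ≤ Nat.card f.ker := by
    rw [← card_map_of_injective (K.comap f).subtype_injective]
    refine card_le_of_le ?_
    rintro _ ⟨x, hx, rfl⟩
    exact congrArg Subtype.val (MonoidHom.mem_ker.mp hx)
  calc Nat.card (K.comap f) = Nat.card φ.range * Nat.card φ.ker := by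
        rw [← index_ker, mul_comm, card_mul_index]
    _ ≤ Nat.card K * Nat.card f.ker := Nat.mul_le_mul (card_le_card_group _) hker

end Subgroup

lemma IsPGroup.card_eq_pow_log {G : Type*} [Group G] [Finite G] {p : ℕ} (hp : p.Prime)
    (hG : IsPGroup p G) : Nat.card G = p ^ Nat.log p (Nat.card G) := by
  have := Fact.mk hp
  obtain ⟨k, hk⟩ := hG.exists_card_eq
  rw [hk, Nat.log_pow hp.one_lt]

lemma IsPGroup.le_card_subgroup_of_ne_bot {G : Type*} [Group G] [Finite G] {p : ℕ}
    (hp : p.Prime) (hG : IsPGroup p G) {H : Subgroup G} (hH : H ≠ ⊥) : p ≤ Nat.card H := by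
  have := Fact.mk hp
  have : Nontrivial H := (nontrivial_iff_ne_bot H).mpr hH
  obtain ⟨n, hn, hcard⟩ := (hG.to_subgroup H).nontrivial_iff_card.mp this
  exact hcard ▸ Nat.le_self_pow hn.ne' p

section CommGroup

variable {G : Type*} [CommGroup G]

lemma Subgroup.card_closure_pair_le (a b : G) :
    Nat.card (closure {a, b}) ≤ orderOf a * orderOf b := by
  have h : (closure {a, b} : Set G) = (zpowers a : Set G) * (zpowers b : Set G) := by
    rw [Set.insert_eq, closure_union, zpowers_eq_closure, zpowers_eq_closure, mul_normal]
  rw [← Nat.card_zpowers a, ← Nat.card_zpowers b, ← SetLike.coe_sort_coe, h]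
  exact Set.natCard_mul_le

lemma card_ker_powMonoidHom_le [Finite G] {n : ℕ} (hn : 0 < n) {a b : G}
    (hab : closure {a, b} = ⊤) : Nat.card (powMonoidHom n : G →* G).ker ≤ n ^ 2 := by
  set R := (powMonoidHom n : G →* G).range
  have hgen : closure {(a : G ⧸ R), (b : G ⧸ R)} = ⊤ := by
    rw [← Set.image_pair, ← QuotientGroup.coe_mk', ← MonoidHom.map_closure, hab,
      map_top_of_surjective _ (QuotientGroup.mk'_surjective R)]
  have horder (q : G ⧸ R) : orderOf q ≤ n := by
    refine orderOf_le_of_pow_eq_one hn ?_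
    induction q using QuotientGroup.induction_on with
    | H x => exact (QuotientGroup.eq_one_iff _).mpr ⟨x, rfl⟩
  calc Nat.card (powMonoidHom n : G →* G).ker
        = Nat.card (closure {(a : G ⧸ R), (b : G ⧸ R)}) := by
        rw [hgen, card_top, ← index_range, index]
    _ ≤ n * n := (card_closure_pair_le _ _).trans (Nat.mul_le_mul (horder _) (horder _))
    _ = n ^ 2 := (sq n).symm

lemma card_filter_relIndex_eq_prime_le [Fintype G] {p : ℕ} (hp : p.Prime) {a b : G}
    (hab : closure {a, b} = ⊤) (K : Subgroup G) :
    #{H | K ≤ H ∧ K.relIndex H = p} ≤ p + 1 := by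
  set X := K.comap (powMonoidHom p : G →* G)
  have hKX : K ≤ X := fun x hx => pow_mem hx p
  have hcount := card_filter_relIndex_eq_mul_add_card_le hp hKX
  have hX : Nat.card X ≤ p ^ 2 * Nat.card K := by
    rw [mul_comm]
    exact (card_comap_le_card_mul_card_ker _ K).trans
      (Nat.mul_le_mul_left _ (card_ker_powMonoidHom_le hp.pos hab))
  have hsub :
      #{H | K ≤ H ∧ K.relIndex H = p} ≤ #{H | K ≤ H ∧ H ≤ X ∧ K.relIndex H = p} := by
    refine card_le_card fun H hH => ?_
    obtain ⟨hKH, hindex⟩ := (mem_filter.mp hH).2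
    -- `K` is normal, so index `p` over `K` forces `x ^ p ∈ K`.
    have hHX : H ≤ X := fun x hx => show x ^ p ∈ K from hindex ▸ pow_relIndex_mem K hx
    exact mem_filter.mpr ⟨mem_univ _, hKH, hHX, hindex⟩
  have hp_sq : p ^ 2 = (p + 1) * (p - 1) + 1 := by
    obtain ⟨q, rfl⟩ : ∃ q, p = q + 1 := ⟨p - 1, (Nat.sub_add_cancel hp.one_le).symm⟩
    rw [Nat.add_sub_cancel]
    ring
  have hpos : 0 < (p - 1) * Nat.card K := Nat.mul_pos (Nat.sub_pos_of_lt hp.one_lt) Nat.card_pos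
  refine hsub.trans (Nat.le_of_mul_le_mul_right ?_ hpos)
  rw [hp_sq] at hX
  linarith

lemma card_filter_card_eq_pow_le [Fintype G] {p : ℕ} (hp : p.Prime) (hG : IsPGroup p G)
    {a b : G} (hab : closure {a, b} = ⊤) (n : ℕ) :
    #{H : Subgroup G | Nat.card H = p ^ n} ≤ (p + 1) ^ n := by
  induction n with
  | zero =>
    refine (card_le_card fun H hH => ?_).trans (card_singleton (⊥ : Subgroup G)).le
    exact mem_singleton.mpr (card_eq_one.mp ((mem_filter.mp hH).2.trans (pow_zero p)))
  | succ n ih =>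
    have hdouble := card_mul_le_card_mul (fun H K : Subgroup G => K ≤ H) (m := 1) (n := p + 1)
      (s := {H : Subgroup G | Nat.card H = p ^ (n + 1)})
      (t := {K : Subgroup G | Nat.card K = p ^ n}) ?_ ?_
    · rw [mul_one] at hdouble
      exact hdouble.trans (by rw [pow_succ]; exact Nat.mul_le_mul_right _ ih)
    · intro H hH
      have hH : Nat.card H = p ^ (n + 1) := (mem_filter.mp hH).2
      obtain ⟨K, hKH, hK⟩ := Sylow.exists_subgroup_le_card_pow_prime_of_le_card hp hG
        (n := n) (H := H) (hH ▸ Nat.pow_le_pow_right hp.pos n.le_succ)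
      exact one_le_card.mpr ⟨K, mem_filter.mpr ⟨mem_filter.mpr ⟨mem_univ _, hK⟩, hKH⟩⟩
    · intro K hK
      have hK : Nat.card K = p ^ n := (mem_filter.mp hK).2
      refine (card_le_card fun H hH => ?_).trans (card_filter_relIndex_eq_prime_le hp hab K)
      simp only [bipartiteBelow, mem_filter, mem_univ, true_and] at hH ⊢
      refine ⟨hH.2, Nat.eq_of_mul_eq_mul_left (pow_pos hp.pos n) ?_⟩
      rw [← hK, ← card_eq_card_mul_relIndex hH.2, hH.1, hK, pow_succ]

lemma sum_one_div_card_sq_le [Fintype G] {p : ℕ} (hp : p.Prime) (hG : IsPGroup p G) {a b : G}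
    (hab : closure {a, b} = ⊤) :
    ∑ H : Subgroup G, (1 / (Nat.card H : ℝ)) ^ 2
      ≤ (1 - ((p : ℝ) + 1) / (p : ℝ) ^ 2)⁻¹ := by
  set r : ℝ := ((p : ℝ) + 1) / (p : ℝ) ^ 2
  have hp2 : (2 : ℝ) ≤ p := by exact_mod_cast hp.two_le
  have hr0 : 0 ≤ r := by positivity
  have hr1 : r < 1 := by rw [div_lt_one (by positivity)]; nlinarith
  set layer : Subgroup G → ℕ := fun H => Nat.log p (Nat.card H)
  have hlayer (H : Subgroup G) : Nat.card H = p ^ layer H :=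
    (hG.to_subgroup H).card_eq_pow_log hp
  have hfiber (n : ℕ) : ∑ H with layer H = n, (1 / (Nat.card H : ℝ)) ^ 2 ≤ r ^ n := by
    have hterm : ∀ H ∈ ({H | layer H = n} : Finset (Subgroup G)),
        (1 / (Nat.card H : ℝ)) ^ 2 = (1 / (p : ℝ) ^ n) ^ 2 := fun H hH => by
      rw [hlayer H, (mem_filter.mp hH).2, Nat.cast_pow]
    have hcard : #{H | layer H = n} ≤ (p + 1) ^ n := by
      refine (card_le_card fun H hH => ?_).trans (card_filter_card_eq_pow_le hp hG hab n)
      exact mem_filter.mpr ⟨mem_univ H, (mem_filter.mp hH).2 ▸ hlayer H⟩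
    calc ∑ H with layer H = n, (1 / (Nat.card H : ℝ)) ^ 2
        = #{H | layer H = n} * (1 / (p : ℝ) ^ n) ^ 2 := by
          rw [sum_congr rfl hterm, sum_const, nsmul_eq_mul]
      _ ≤ ((p : ℝ) + 1) ^ n * (1 / (p : ℝ) ^ n) ^ 2 := by
          gcongr
          exact_mod_cast hcard
      _ = r ^ n := by
          rw [div_pow ((p : ℝ) + 1), ← pow_mul, mul_comm 2 n, pow_mul]
          ring
  rw [← sum_fiberwise_of_maps_to fun H _ => mem_image_of_mem layer (mem_univ H)]
  calc ∑ n ∈ univ.image layer, ∑ H with layer H = n, (1 / (Nat.card H : ℝ)) ^ 2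
      ≤ ∑ n ∈ univ.image layer, r ^ n := sum_le_sum fun n _ => hfiber n
    _ ≤ ∑' n, r ^ n :=
        Summable.sum_le_tsum _ (fun n _ => pow_nonneg hr0 n) (summable_geometric_of_lt_one hr0 hr1)
    _ = (1 - r)⁻¹ := tsum_geometric_of_lt_one hr0 hr1

lemma sum_erase_bot_one_div_card_sq_le [Fintype G] {p : ℕ} (hp : p.Prime) (hp3 : 3 ≤ p)
    (hG : IsPGroup p G) {a b : G} (hab : closure {a, b} = ⊤) :
    ∑ H ∈ univ.erase (⊥ : Subgroup G), (1 / (Nat.card H : ℝ)) ^ 2 ≤ 4 / 5 := by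
  have hp3' : (3 : ℝ) ≤ p := by exact_mod_cast hp3
  have hr : ((p : ℝ) + 1) / (p : ℝ) ^ 2 ≤ 4 / 9 := by
    rw [div_le_iff₀ (by positivity)]
    nlinarith
  have hinv : (1 - ((p : ℝ) + 1) / (p : ℝ) ^ 2)⁻¹ ≤ 9 / 5 := by
    rw [inv_le_comm₀ (by linarith) (by norm_num)]
    linarith
  rw [sum_erase_eq_sub (mem_univ _), card_bot, Nat.cast_one, div_one, one_pow]
  linarith [sum_one_div_card_sq_le hp hG hab]

lemma abs_finsum_mem_le_of_abs_le_one_div_card_sq [Fintype G] {p : ℕ} (hp : p.Prime)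
    (hp3 : 3 ≤ p) (hG : IsPGroup p G) {a b : G} (hab : closure {a, b} = ⊤)
    {T : Set (Subgroup G)} (hT : ∀ H ∈ T, H ≠ ⊥) {f : Subgroup G → ℝ}
    (hf : ∀ H : Subgroup G, H ≠ ⊥ → |f H| ≤ (1 / (Nat.card H : ℝ)) ^ 2) :
    |∑ᶠ H ∈ T, f H| ≤ 4 / 5 := by
  rw [finsum_mem_eq_toFinset_sum]
  calc |∑ H ∈ T.toFinset, f H| ≤ ∑ H ∈ T.toFinset, |f H| := abs_sum_le_sum_abs _ _
    _ ≤ ∑ H ∈ T.toFinset, (1 / (Nat.card H : ℝ)) ^ 2 :=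
        sum_le_sum fun H hH => hf H (hT H (Set.mem_toFinset.mp hH))
    _ ≤ ∑ H ∈ univ.erase (⊥ : Subgroup G), (1 / (Nat.card H : ℝ)) ^ 2 :=
        sum_le_sum_of_subset_of_nonneg
          (fun H hH => mem_erase.mpr ⟨hT H (Set.mem_toFinset.mp hH), mem_univ H⟩)
          fun _ _ _ => by positivity
    _ ≤ 4 / 5 := sum_erase_bot_one_div_card_sq_le hp hp3 hG hab

end CommGroup

lemma tsum_pow_add_two_div_le_sq {x : ℝ} (hx0 : 0 ≤ x) (hx : x ≤ 1 / 2) :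
    ∑' k : ℕ, x ^ (k + 2) / ((k : ℝ) + 2) ≤ x ^ 2 := by
  have hx1 : x < 1 := by linarith
  have hle (k : ℕ) : x ^ (k + 2) / ((k : ℝ) + 2) ≤ x ^ 2 / 2 * x ^ k :=
    calc x ^ (k + 2) / ((k : ℝ) + 2) ≤ x ^ (k + 2) / 2 :=
          div_le_div_of_nonneg_left (by positivity) two_pos
            (le_add_of_nonneg_left k.cast_nonneg)
      _ = x ^ 2 / 2 * x ^ k := by ring
  have hgeom : Summable fun k : ℕ => x ^ 2 / 2 * x ^ k :=
    (summable_geometric_of_lt_one hx0 hx1).mul_left _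
  calc ∑' k : ℕ, x ^ (k + 2) / ((k : ℝ) + 2) ≤ ∑' k : ℕ, x ^ 2 / 2 * x ^ k :=
        (hgeom.of_nonneg_of_le (fun k => by positivity) hle).tsum_le_tsum hle hgeom
    _ = x ^ 2 / 2 * (1 - x)⁻¹ := by rw [tsum_mul_left, tsum_geometric_of_lt_one hx0 hx1]
    _ ≤ x ^ 2 := by
        rw [← div_eq_mul_inv, div_div, div_le_iff₀ (by linarith)]
        nlinarith [sq_nonneg x]

lemma Real.abs_log_one_add_sub_self_le_sq {y : ℝ} (hy : 0 ≤ y) :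
    |Real.log (1 + y) - y| ≤ y ^ 2 := by
  have hpos : 0 < 1 + y := by linarith
  have hupper := Real.log_le_sub_one_of_pos hpos
  have hlower := Real.one_sub_inv_le_log_of_pos hpos
  have hinv : (1 + y)⁻¹ ≤ 1 - y + y ^ 2 := by
    rw [inv_le_iff_one_le_mul₀ hpos]
    nlinarith [pow_nonneg hy 3]
  rw [abs_le]
  constructor <;> linarith [sq_nonneg y]

/-- **Lemma (logarithmic estimate for rank two `p`-groups).** Let `p ≥ 3` be prime
and `G` a rank two abelian `p`-group. Then
`∑_{H ≠ 1} ∑_{k ≥ 2} |H|^{-k}/k ≤ 1`; consequently, for any set `T` of nontrivial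
subgroups of `G`, `|∑_{H ∈ T} (log(1 + 1/|H|) − 1/|H|)| ≤ 1`. -/
theorem log_estimate (p : ℕ) (hp : p.Prime) (hp3 : 3 ≤ p)
    (G : Type*) [CommGroup G] [Fintype G] (hG : IsPGroup p G)
    (hrk : ∃ a b : G, Subgroup.closure {a, b} = ⊤) :
    (∑ᶠ (H : Subgroup G) (_ : H ≠ ⊥),
        (∑' k : ℕ, (1 / (Nat.card H : ℝ)) ^ (k + 2) / ((k : ℝ) + 2)) ≤ 1) ∧
    (∀ T : Set (Subgroup G), (∀ H ∈ T, H ≠ ⊥) →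
      |∑ᶠ H ∈ T, (Real.log (1 + 1 / (Nat.card H : ℝ)) - 1 / (Nat.card H : ℝ))| ≤ 1) := by
  obtain ⟨a, b, hab⟩ := hrk
  have hsmall (H : Subgroup G) (hH : H ≠ ⊥) : 1 / (Nat.card H : ℝ) ≤ 1 / 2 := by
    have : (2 : ℝ) ≤ Nat.card H := by
      exact_mod_cast hp.two_le.trans (hG.le_card_subgroup_of_ne_bot hp hH)
    exact one_div_le_one_div_of_le two_pos this
  refine ⟨?_, fun T hT => ?_⟩
  · have hinner (H : Subgroup G) (hH : H ≠ ⊥) :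
        |∑' k : ℕ, (1 / (Nat.card H : ℝ)) ^ (k + 2) / ((k : ℝ) + 2)|
          ≤ (1 / (Nat.card H : ℝ)) ^ 2 := by
      rw [abs_of_nonneg (tsum_nonneg fun k => by positivity)]
      exact tsum_pow_add_two_div_le_sq (by positivity) (hsmall H hH)
    calc _ ≤ |_| := le_abs_self _
      _ ≤ 4 / 5 := abs_finsum_mem_le_of_abs_le_one_div_card_sq hp hp3 hG hab
          (T := {H | H ≠ ⊥}) (fun H hH => hH) hinner
      _ ≤ 1 := by norm_num
  · exact (abs_finsum_mem_le_of_abs_le_one_div_card_sq hp hp3 hG hab hT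
      fun H _ => Real.abs_log_one_add_sub_self_le_sq (by positivity)).trans (by norm_num)
end

section
/- Let H be a finite abelian group of odd order, K a maximal proper subgroup of H, and χ ∈ K̂. Let X = {τ ∈ Ĥ : τ restricted to K equals χ}. For each subgroup L ≤ H with L ≰ K, let P_L be the partition of X induced by the equivalence τ ≡ τ' iff the restriction of τ to L equals the restriction of τ' or of its complex conjugate τ̄' to L. Let S_χ = {L ≤ H : L ≰ K and K ⊓ L ≤ ker χ}. Then: (1) if M ≤ L (both ≰ K) then P_L refines P_M; (2) if M ≤ L and L ∈ S_χ then P_L = P_M; (3) every block of P_L has cardinality at most 2; (4) if L ∉ S_χ then P_L is the discrete partition of X; (5) if L ∈ S_χ then P_L has exactly one singleton block, namely {τ} for the unique τ ∈ X whose restriction to L is trivial, and every other block has cardinality exactly 2; (6) if M, L ≰ K and P_M ≠ P_L, then every block of P_M meets every block of P_L in at most one element. -/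
open scoped Classical

/-- The equivalence on characters of `H` induced by a subgroup `L`: two characters
are related iff their restrictions to `L` agree up to complex conjugation. -/
def relOn {H : Type*} [CommGroup H] (L : Subgroup H) (τ τ' : CharGp H) : Prop :=
  resCharTop L τ = resCharTop L τ' ∨ resCharTop L τ = charConj (resCharTop L τ')

/-! Since `L ≰ K` and `K` is maximal, `K ⊔ L = H`, so a character in the fibre `X` over `χ` is
determined by its restriction to `L`; on a finite group conjugation is inversion. Hence for
`τ, τ' ∈ X` we have `τ ≡_L τ'` iff `τ = τ'` or `ττ'` is trivial on `L`. Since `ττ'` restricts to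
`χ²` on `K`, the second alternative forces `χ² = 1`, hence (odd order) `χ = 1`, on `K ⊓ L`.
Conversely, if `χ` is trivial on `K ⊓ L` it extends to some `τ₀ ∈ X` trivial on `L`; then `ττ'`
is trivial on `L` iff `ττ' = τ₀²`, so the block of `τ` is `{τ, τ⁻¹τ₀²}`. The same injectivity
argument, with `ττ'` in place of `τ₀²`, shows that two relations sharing a pair `τ ≠ τ'`
coincide on `X`. -/

theorem MonoidHom.apply_eq_one_of_sq_eq_one {G M : Type*} [Group G] [Finite G] [Monoid M]
    (hG : Odd (Nat.card G)) (f : G →* M) {x : G} (h : f x ^ 2 = 1) : f x = 1 :=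
  orderOf_eq_one_iff.mp <| Nat.eq_one_of_dvd_coprimes (Nat.coprime_two_left.mpr hG)
    (orderOf_dvd_of_pow_eq_one h) ((orderOf_map_dvd f x).trans (orderOf_dvd_natCard x))

theorem charConj_eq_inv {G : Type*} [Group G] [Finite G] (ψ : CharGp G) :
    charConj ψ = ψ⁻¹ := by
  ext x
  have hpow : (ψ x : ℂ) ^ Nat.card G = 1 := by
    rw [← Units.val_pow_eq_pow_val, ← map_pow, pow_card_eq_one', map_one, Units.val_one]
  change starRingEnd ℂ _ = _
  rw [MonoidHom.inv_apply, Units.val_inv_eq_inv_val]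
  exact (Complex.inv_eq_conj (Complex.norm_eq_one_of_pow_eq_one hpow Nat.card_pos.ne')).symm

section CommGroup

variable {G : Type*} [CommGroup G] {K L M : Subgroup G} {χ : CharGp K} {τ τ' σ σ₀ : CharGp G}

theorem resCharTop_mul (L : Subgroup G) (τ τ' : CharGp G) :
    resCharTop L (τ * τ') = resCharTop L τ * resCharTop L τ' := rfl

theorem resCharTop_inv (L : Subgroup G) (τ : CharGp G) :
    resCharTop L τ⁻¹ = (resCharTop L τ)⁻¹ := rfl

theorem resCharTop_eq_one_of_le (hML : M ≤ L) (h : resCharTop L τ = 1) :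
    resCharTop M τ = 1 := by
  ext x
  exact congrArg Units.val (DFunLike.congr_fun h ⟨x, hML x.2⟩)

theorem resCharTop_mul_self_of_eq_one (h : resCharTop L τ = 1) : resCharTop L (τ * τ) = 1 := by
  rw [resCharTop_mul, h]
  exact mul_one (1 : CharGp L)

theorem relOn_mono (hML : M ≤ L) (h : relOn L τ τ') : relOn M τ τ' :=
  h.imp (congrArg (resChar hML)) (congrArg (resChar hML))

theorem relOn_iff [Finite G] :
    relOn L τ τ' ↔ resCharTop L τ = resCharTop L τ' ∨ resCharTop L (τ * τ') = 1 := by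
  rw [relOn, charConj_eq_inv]
  -- `rw` with group lemmas does not unify the instances on `L →* ℂˣ`; they are applied as terms
  exact or_congr_right (eq_inv_iff_mul_eq_one (G := L →* ℂˣ))

theorem eq_iff_resCharTop_eq_of_sup_eq_top (hKL : K ⊔ L = ⊤)
    (hK : resCharTop K τ = resCharTop K τ') : τ = τ' ↔ resCharTop L τ = resCharTop L τ' := by
  refine ⟨congrArg _, fun hL => ?_⟩
  have hle : K ⊔ L ≤ τ.eqLocus τ' :=
    sup_le (fun x hx => (DFunLike.congr_fun hK ⟨x, hx⟩ :))
      (fun x hx => (DFunLike.congr_fun hL ⟨x, hx⟩ :))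
  rw [hKL] at hle
  exact MonoidHom.ext fun x => hle (Subgroup.mem_top x)

theorem exists_resCharTop_eq_and_eq_one (hKL : K ⊔ L = ⊤) (χ : CharGp K)
    (hχ : (K ⊓ L).subgroupOf K ≤ χ.ker) :
    ∃ τ : CharGp G, resCharTop K τ = χ ∧ resCharTop L τ = 1 := by
  set φ : K →* G ⧸ L := (QuotientGroup.mk' L).comp K.subtype
  have hφ : Function.Surjective φ := by
    refine QuotientGroup.mk_surjective.forall.mpr fun z => ?_
    obtain ⟨k, hk, l, hl, rfl⟩ := Subgroup.mem_sup.mp (hKL ▸ Subgroup.mem_top z)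
    exact ⟨⟨k, hk⟩, QuotientGroup.eq.mpr (by simpa using hl)⟩
  have hker : φ.ker ≤ χ.ker := fun x hx =>
    hχ (Subgroup.mem_subgroupOf.mpr ⟨x.2, (QuotientGroup.eq_one_iff _).mp hx⟩)
  set ψ := φ.liftOfSurjective hφ ⟨χ, hker⟩
  refine ⟨ψ.comp (QuotientGroup.mk' L), MonoidHom.ext fun x => ?_, MonoidHom.ext fun x => ?_⟩
  · exact φ.liftOfRightInverse_comp_apply _ (Function.rightInverse_surjInv hφ) ⟨χ, hker⟩ x
  · change ψ (x : G) = 1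
    rw [(QuotientGroup.eq_one_iff _).mpr x.2, map_one]

theorem resCharTop_eq_one_iff_eq (hKL : K ⊔ L = ⊤) (hK : resCharTop K σ = resCharTop K σ₀)
    (h₀ : resCharTop L σ₀ = 1) : resCharTop L σ = 1 ↔ σ = σ₀ := by
  rw [eq_iff_resCharTop_eq_of_sup_eq_top hKL hK, h₀]

theorem existsUnique_resCharTop_eq_and_eq_one (hKL : K ⊔ L = ⊤)
    (hχ : (K ⊓ L).subgroupOf K ≤ χ.ker) :
    ∃! τ : CharGp G, resCharTop K τ = χ ∧ resCharTop L τ = 1 := by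
  obtain ⟨τ₀, hτ₀K, hτ₀L⟩ := exists_resCharTop_eq_and_eq_one hKL χ hχ
  refine ⟨τ₀, ⟨hτ₀K, hτ₀L⟩, fun τ ⟨hτK, hτL⟩ => ?_⟩
  exact (resCharTop_eq_one_iff_eq hKL (hτK.trans hτ₀K.symm) hτ₀L).mp hτL

variable [Finite G]

theorem relOn_iff_eq_or_of_sup_eq_top (hKL : K ⊔ L = ⊤)
    (hK : resCharTop K τ = resCharTop K τ') :
    relOn L τ τ' ↔ τ = τ' ∨ resCharTop L (τ * τ') = 1 := by
  rw [relOn_iff, eq_iff_resCharTop_eq_of_sup_eq_top hKL hK]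

theorem relOn_iff_eq_or_mul_eq (hKL : K ⊔ L = ⊤) (hτ : resCharTop K τ = χ)
    (hτ' : resCharTop K τ' = χ) (hσ₀K : resCharTop K σ₀ = χ * χ) (hσ₀L : resCharTop L σ₀ = 1) :
    relOn L τ τ' ↔ τ = τ' ∨ τ * τ' = σ₀ := by
  rw [relOn_iff_eq_or_of_sup_eq_top hKL (hτ.trans hτ'.symm),
    resCharTop_eq_one_iff_eq hKL (by rw [resCharTop_mul, hτ, hτ', hσ₀K]) hσ₀L]

theorem relOn_iff_of_le (hKM : K ⊔ M = ⊤) (hML : M ≤ L) (hχ : (K ⊓ L).subgroupOf K ≤ χ.ker)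
    (hτ : resCharTop K τ = χ) (hτ' : resCharTop K τ' = χ) : relOn L τ τ' ↔ relOn M τ τ' := by
  have hKL : K ⊔ L = ⊤ := top_le_iff.mp (hKM ▸ sup_le_sup_left hML K)
  obtain ⟨τ₀, hτ₀K, hτ₀L⟩ := exists_resCharTop_eq_and_eq_one hKL χ hχ
  have hσ₀K : resCharTop K (τ₀ * τ₀) = χ * χ := by rw [resCharTop_mul, hτ₀K]
  have hσ₀L : resCharTop L (τ₀ * τ₀) = 1 := resCharTop_mul_self_of_eq_one hτ₀L
  rw [relOn_iff_eq_or_mul_eq hKL hτ hτ' hσ₀K hσ₀L,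
    relOn_iff_eq_or_mul_eq hKM hτ hτ' hσ₀K (resCharTop_eq_one_of_le hML hσ₀L)]

theorem relOn_iff_relOn_of_ne (hKM : K ⊔ M = ⊤) (hKL : K ⊔ L = ⊤) (hτ : resCharTop K τ = χ)
    (hτ' : resCharTop K τ' = χ) (hne : τ ≠ τ') (hM : relOn M τ τ') (hL : relOn L τ τ')
    {ρ ρ' : CharGp G} (hρ : resCharTop K ρ = χ) (hρ' : resCharTop K ρ' = χ) :
    relOn M ρ ρ' ↔ relOn L ρ ρ' := by
  have hσK : resCharTop K (τ * τ') = χ * χ := by rw [resCharTop_mul, hτ, hτ']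
  rw [relOn_iff_eq_or_of_sup_eq_top hKM (hτ.trans hτ'.symm), or_iff_right hne] at hM
  rw [relOn_iff_eq_or_of_sup_eq_top hKL (hτ.trans hτ'.symm), or_iff_right hne] at hL
  rw [relOn_iff_eq_or_mul_eq hKM hρ hρ' hσK hM, relOn_iff_eq_or_mul_eq hKL hρ hρ' hσK hL]

theorem setOf_relOn_eq_pair (hKL : K ⊔ L = ⊤) {τ₀ : CharGp G} (hτ : resCharTop K τ = χ)
    (hτ₀K : resCharTop K τ₀ = χ) (hτ₀L : resCharTop L τ₀ = 1) :
    {τ' | resCharTop K τ' = χ ∧ relOn L τ τ'} = {τ, τ⁻¹ * (τ₀ * τ₀)} := by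
  have hσ₀K : resCharTop K (τ₀ * τ₀) = χ * χ := by rw [resCharTop_mul, hτ₀K]
  have hσ₀L : resCharTop L (τ₀ * τ₀) = 1 := resCharTop_mul_self_of_eq_one hτ₀L
  have hρ : resCharTop K (τ⁻¹ * (τ₀ * τ₀)) = χ := by
    rw [resCharTop_mul, hσ₀K, resCharTop_inv, hτ]
    exact inv_mul_cancel_left χ χ
  have hrel : ∀ {τ'}, resCharTop K τ' = χ →
      (relOn L τ τ' ↔ τ' = τ ∨ τ' = τ⁻¹ * (τ₀ * τ₀)) := by
    intro τ' hτ'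
    rw [relOn_iff_eq_or_mul_eq hKL hτ hτ' hσ₀K hσ₀L]
    exact or_congr eq_comm (eq_inv_mul_iff_mul_eq (G := CharGp G)).symm
  ext τ'
  simp only [Set.mem_insert_iff, Set.mem_singleton_iff]
  refine ⟨fun ⟨hτ', hr⟩ => (hrel hτ').mp hr, ?_⟩
  rintro (rfl | rfl)
  · exact ⟨hτ, Or.inl rfl⟩
  · exact ⟨hρ, (hrel hρ).mpr (Or.inr rfl)⟩

theorem setOf_relOn_eq_singleton_of_resCharTop_eq_one (hKL : K ⊔ L = ⊤)
    (hτ : resCharTop K τ = χ) (hτL : resCharTop L τ = 1) :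
    {τ' | resCharTop K τ' = χ ∧ relOn L τ τ'} = {τ} := by
  have hρ : τ⁻¹ * (τ * τ) = τ := inv_mul_cancel_left τ τ
  rw [setOf_relOn_eq_pair hKL hτ hτ hτL, hρ, Set.pair_eq_singleton]

theorem le_ker_of_resCharTop_mul_eq_one (hodd : Odd (Nat.card G)) (hτ : resCharTop K τ = χ)
    (hτ' : resCharTop K τ' = χ) (h : resCharTop L (τ * τ') = 1) :
    (K ⊓ L).subgroupOf K ≤ χ.ker := by
  intro x hx
  have hτx : τ x = χ x := DFunLike.congr_fun hτ x
  have hsq : τ x ^ 2 = 1 := by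
    have hτ'x : τ' x = τ x := (DFunLike.congr_fun hτ' x).trans hτx.symm
    have hmul : τ x * τ' x = 1 := DFunLike.congr_fun h ⟨x, (Subgroup.mem_subgroupOf.mp hx).2⟩
    rwa [hτ'x, ← sq] at hmul
  rw [MonoidHom.mem_ker, ← hτx]
  exact τ.apply_eq_one_of_sq_eq_one hodd hsq

theorem resCharTop_eq_one_of_mul_self (hodd : Odd (Nat.card G))
    (h : resCharTop L (τ * τ) = 1) : resCharTop L τ = 1 :=
  MonoidHom.ext fun x =>
    τ.apply_eq_one_of_sq_eq_one hodd ((sq (τ x)).trans (DFunLike.congr_fun h x))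

theorem relOn_iff_eq_of_not_le_ker (hodd : Odd (Nat.card G)) (hKL : K ⊔ L = ⊤)
    (hχ : ¬ (K ⊓ L).subgroupOf K ≤ χ.ker) (hτ : resCharTop K τ = χ) (hτ' : resCharTop K τ' = χ) :
    relOn L τ τ' ↔ τ = τ' := by
  rw [relOn_iff_eq_or_of_sup_eq_top hKL (hτ.trans hτ'.symm),
    or_iff_left (mt (le_ker_of_resCharTop_mul_eq_one hodd hτ hτ') hχ)]

theorem setOf_relOn_eq_singleton_of_not_le_ker (hodd : Odd (Nat.card G)) (hKL : K ⊔ L = ⊤)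
    (hχ : ¬ (K ⊓ L).subgroupOf K ≤ χ.ker) (hτ : resCharTop K τ = χ) :
    {τ' | resCharTop K τ' = χ ∧ relOn L τ τ'} = {τ} := by
  ext τ'
  refine ⟨fun ⟨hτ', hr⟩ => ((relOn_iff_eq_of_not_le_ker hodd hKL hχ hτ hτ').mp hr).symm, ?_⟩
  rintro rfl
  exact ⟨hτ, Or.inl rfl⟩

theorem ncard_setOf_relOn_le_two (hodd : Odd (Nat.card G)) (hKL : K ⊔ L = ⊤)
    (hτ : resCharTop K τ = χ) : {τ' | resCharTop K τ' = χ ∧ relOn L τ τ'}.ncard ≤ 2 := by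
  by_cases hχ : (K ⊓ L).subgroupOf K ≤ χ.ker
  · obtain ⟨τ₀, hτ₀K, hτ₀L⟩ := exists_resCharTop_eq_and_eq_one hKL χ hχ
    rw [setOf_relOn_eq_pair hKL hτ hτ₀K hτ₀L]
    exact (Set.ncard_insert_le _ _).trans (by rw [Set.ncard_singleton])
  · rw [setOf_relOn_eq_singleton_of_not_le_ker hodd hKL hχ hτ, Set.ncard_singleton]
    omega

theorem ncard_setOf_relOn_eq_two (hodd : Odd (Nat.card G)) (hKL : K ⊔ L = ⊤)
    (hχ : (K ⊓ L).subgroupOf K ≤ χ.ker) (hτ : resCharTop K τ = χ) (hτL : resCharTop L τ ≠ 1) :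
    {τ' | resCharTop K τ' = χ ∧ relOn L τ τ'}.ncard = 2 := by
  obtain ⟨τ₀, hτ₀K, hτ₀L⟩ := exists_resCharTop_eq_and_eq_one hKL χ hχ
  rw [setOf_relOn_eq_pair hKL hτ hτ₀K hτ₀L]
  refine Set.ncard_pair fun h => hτL (resCharTop_eq_one_of_mul_self hodd ?_)
  have hsq : τ * τ = τ₀ * τ₀ := (eq_inv_mul_iff_mul_eq (G := CharGp G)).mp h
  rw [hsq]
  exact resCharTop_mul_self_of_eq_one hτ₀L

end CommGroup

/-- **Lemma (structure of the partitions `P_L`).** Let `H` be a finite abelian group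
of odd order, `K` a maximal proper subgroup, `χ ∈ K̂`, `X ⊆ Ĥ` the fiber of `χ`
under restriction, and for `L ≰ K` let `P_L` be the partition of `X` induced by
`relOn L`.  Let `S_χ` consist of those `L ≰ K` with `K ⊓ L ≤ ker χ`.  Then the six
structural claims (1)–(6) hold. -/
theorem partition_structure (H : Type*) [CommGroup H] [Fintype H]
    (hodd : Odd (Nat.card H)) (K : Subgroup H) (hK : IsCoatom K) (χ : CharGp K) :
    -- (1) if `M ≤ L` then `P_L` refines `P_M`
    (∀ M L : Subgroup H, ¬ M ≤ K → ¬ L ≤ K → M ≤ L →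
      ∀ τ, resCharTop K τ = χ → ∀ τ', resCharTop K τ' = χ →
        relOn L τ τ' → relOn M τ τ') ∧
    -- (2) if `M ≤ L` and `L ∈ S_χ` then `P_L = P_M`
    (∀ M L : Subgroup H, ¬ M ≤ K → ¬ L ≤ K → M ≤ L →
      (K ⊓ L).subgroupOf K ≤ χ.ker →
      ∀ τ, resCharTop K τ = χ → ∀ τ', resCharTop K τ' = χ →
        (relOn L τ τ' ↔ relOn M τ τ')) ∧
    -- (3) every block of `P_L` has cardinality at most two
    (∀ L : Subgroup H, ¬ L ≤ K → ∀ τ, resCharTop K τ = χ →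
      ({τ' | resCharTop K τ' = χ ∧ relOn L τ τ'}).ncard ≤ 2) ∧
    -- (4) if `L ∉ S_χ` then `P_L` is discrete
    (∀ L : Subgroup H, ¬ L ≤ K → ¬ ((K ⊓ L).subgroupOf K ≤ χ.ker) →
      ∀ τ, resCharTop K τ = χ → ∀ τ', resCharTop K τ' = χ →
        (relOn L τ τ' ↔ τ = τ')) ∧
    -- (5) if `L ∈ S_χ` then `P_L` has exactly one singleton block, the one of the
    -- unique `τ ∈ X` restricting trivially to `L`; all other blocks have size two
    (∀ L : Subgroup H, ¬ L ≤ K → (K ⊓ L).subgroupOf K ≤ χ.ker →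
      (∃! τ : CharGp H, resCharTop K τ = χ ∧ resCharTop L τ = 1) ∧
      (∀ τ, resCharTop K τ = χ →
        (resCharTop L τ = 1 → {τ' | resCharTop K τ' = χ ∧ relOn L τ τ'} = {τ}) ∧
        (resCharTop L τ ≠ 1 →
          ({τ' | resCharTop K τ' = χ ∧ relOn L τ τ'}).ncard = 2))) ∧
    -- (6) if `P_M ≠ P_L` then blocks of `P_M` and `P_L` meet in at most one element
    (∀ M L : Subgroup H, ¬ M ≤ K → ¬ L ≤ K →
      ¬ (∀ τ, resCharTop K τ = χ → ∀ τ', resCharTop K τ' = χ →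
          (relOn M τ τ' ↔ relOn L τ τ')) →
      ∀ τ, resCharTop K τ = χ → ∀ τ', resCharTop K τ' = χ →
        relOn M τ τ' → relOn L τ τ' → τ = τ') := by
  have hsup : ∀ {L : Subgroup H}, ¬ L ≤ K → K ⊔ L = ⊤ := fun hL =>
    (hK.not_le_iff_codisjoint.mp hL).eq_top
  refine ⟨fun M L _ _ hML _ _ _ _ => relOn_mono hML,
    fun M L hM _ hML hχ _ hτ _ hτ' => relOn_iff_of_le (hsup hM) hML hχ hτ hτ',
    fun L hL _ hτ => ncard_setOf_relOn_le_two hodd (hsup hL) hτ,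
    fun L hL hχ _ hτ _ hτ' => relOn_iff_eq_of_not_le_ker hodd (hsup hL) hχ hτ hτ',
    fun L hL hχ => ⟨existsUnique_resCharTop_eq_and_eq_one (hsup hL) hχ, fun _ hτ =>
      ⟨setOf_relOn_eq_singleton_of_resCharTop_eq_one (hsup hL) hτ,
        ncard_setOf_relOn_eq_two hodd (hsup hL) hχ hτ⟩⟩,
    fun M L hM hL hne _ hτ _ hτ' hrM hrL => Classical.byContradiction fun hne' =>
      hne fun _ hρ _ hρ' => relOn_iff_relOn_of_ne (hsup hM) (hsup hL) hτ hτ' hne' hrM hrL hρ hρ'⟩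
end
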